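/- Let X be a Banach space, let 𝒦_C(X) be the set of convex Katetov maps on X, let λ ∈ (0,1), and let g ∈ 𝒦_C(X). Then there exists a unique f₀ ∈ 𝒦_C(X) such that (λ ⋆ f₀) ⊕ g = f₀, i.e. such that for every x ∈ X, inf { λ f₀(y/λ) + g(z) : y,z ∈ X, y + z = x } = f₀(x). -/

import Mathlib

/-!
The map `f ↦ (λ ⋆ f) ⊕ g` preserves convex Katetov maps and is a `λ`-contraction for `d_∞`:
`λ ⋆ ·` scales `d_∞` by `λ` and `· ⊕ g` does not increase it. Two Katetov maps differ by at most
`f 0 + g 0`, so `f ↦ f - g` embeds `𝒦_C(X)` isometrically onto a closed subset of the complete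
space `X →ᵇ ℝ`, and Banach's fixed point theorem applies.
-/

/-- A Katetov map: `|f x − f y| ≤ d(x,y) ≤ f x + f y` for all `x, y`. -/
def IsKatetov {X : Type*} [MetricSpace X] (f : X → ℝ) : Prop :=
  ∀ x y : X, |f x - f y| ≤ dist x y ∧ dist x y ≤ f x + f y

open Set Function

namespace IsKatetov

variable {X : Type*} [MetricSpace X] {f g : X → ℝ}

theorem nonneg (hf : IsKatetov f) : 0 ≤ f := fun x => by
  have := (hf x x).2
  rw [dist_self] at this
  show 0 ≤ f x
  linarith

theorem lipschitzWith_one (hf : IsKatetov f) : LipschitzWith 1 f :=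
  LipschitzWith.of_dist_le_mul fun x y => by simpa [Real.dist_eq] using (hf x y).1

theorem continuous (hf : IsKatetov f) : Continuous f :=
  hf.lipschitzWith_one.continuous

theorem abs_sub_le_add (hf : IsKatetov f) (hg : IsKatetov g) (x₀ x : X) :
    |f x - g x| ≤ f x₀ + g x₀ := by
  have hf₁ := abs_le.mp (hf x x₀).1
  have hf₂ := (hf x x₀).2
  have hg₁ := abs_le.mp (hg x x₀).1
  have hg₂ := (hg x x₀).2
  rw [abs_sub_le_iff]
  constructor <;> linarith

end IsKatetov

theorem isClosed_setOf_isKatetov {X : Type*} [MetricSpace X] :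
    IsClosed {f : X → ℝ | IsKatetov f} := by
  simp only [IsKatetov, ofPred_forall, ofPred_and]
  exact isClosed_iInter fun x => isClosed_iInter fun y =>
    (isClosed_le (by fun_prop) continuous_const).inter (isClosed_le continuous_const (by fun_prop))

section InfConv

variable {E : Type*} [NormedAddCommGroup E] {f f' g : E → ℝ} {x : E}

noncomputable def infConv (f g : E → ℝ) (x : E) : ℝ :=
  sInf {r : ℝ | ∃ y z : E, y + z = x ∧ r = f y + g z}

theorem le_infConv {c : ℝ} (h : ∀ y z, y + z = x → c ≤ f y + g z) : c ≤ infConv f g x :=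
  le_csInf ⟨f x + g 0, x, 0, add_zero x, rfl⟩ <| by
    rintro _ ⟨y, z, hyz, rfl⟩
    exact h y z hyz

theorem infConv_le (hf : 0 ≤ f) (hg : 0 ≤ g) {y z : E} (hyz : y + z = x) :
    infConv f g x ≤ f y + g z := by
  refine csInf_le ⟨0, fun _ ⟨y', z', _, hr⟩ => ?_⟩ ⟨y, z, hyz, rfl⟩
  exact hr ▸ add_nonneg (hf y') (hg z')

theorem exists_add_lt_infConv_add {ε : ℝ} (hε : 0 < ε) :
    ∃ y z, y + z = x ∧ f y + g z < infConv f g x + ε := by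
  have hne : {r : ℝ | ∃ y z : E, y + z = x ∧ r = f y + g z}.Nonempty :=
    ⟨f x + g 0, x, 0, add_zero x, rfl⟩
  obtain ⟨_, ⟨y, z, hyz, rfl⟩, hlt⟩ := Real.lt_sInf_add_pos hne hε
  exact ⟨y, z, hyz, hlt⟩

theorem infConv_le_infConv_add (hf : 0 ≤ f) (hg : 0 ≤ g) {C : ℝ}
    (hC : ∀ u, f u ≤ f' u + C) :
    infConv f g x ≤ infConv f' g x + C := by
  suffices infConv f g x - C ≤ infConv f' g x by linarith
  refine le_infConv fun y z hyz => ?_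
  linarith [infConv_le hf hg hyz, hC y]

theorem abs_infConv_sub_infConv_le (hf : 0 ≤ f) (hf' : 0 ≤ f') (hg : 0 ≤ g) {C : ℝ}
    (hC : ∀ u, |f u - f' u| ≤ C) : |infConv f g x - infConv f' g x| ≤ C := by
  rw [abs_sub_le_iff]
  have h₁ : ∀ u, f u ≤ f' u + C := fun u => by linarith [(abs_le.mp (hC u)).2]
  have h₂ : ∀ u, f' u ≤ f u + C := fun u => by linarith [(abs_le.mp (hC u)).1]
  exact ⟨by linarith [infConv_le_infConv_add (x := x) hf hg h₁],
    by linarith [infConv_le_infConv_add (x := x) hf' hg h₂]⟩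

theorem isKatetov_infConv (hf : IsKatetov f) (hg : IsKatetov g) : IsKatetov (infConv f g) := by
  have le_add_norm (x x' : E) : infConv f g x ≤ infConv f g x' + ‖x - x'‖ := by
    suffices infConv f g x - ‖x - x'‖ ≤ infConv f g x' by linarith
    refine le_infConv fun y z hyz => ?_
    have hx : y + (z + (x - x')) = x := by rw [← add_assoc, hyz]; abel
    have hg' := (abs_le.mp (hg (z + (x - x')) z).1).2
    rw [dist_eq_norm, add_sub_cancel_left] at hg'
    linarith [infConv_le hf.nonneg hg.nonneg hx]
  intro x x'
  refine ⟨?_, ?_⟩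
  · rw [abs_sub_le_iff, dist_eq_norm]
    exact ⟨by linarith [le_add_norm x x'], by linarith [le_add_norm x' x, norm_sub_rev x x']⟩
  · have hx' (y z : E) (hyz : y + z = x) : dist x x' - (f y + g z) ≤ infConv f g x' := by
      refine le_infConv fun y' z' hyz' => ?_
      have hsplit : x - x' = (y - y') + (z - z') := by rw [← hyz, ← hyz']; abel
      have htri : dist x x' ≤ dist y y' + dist z z' := by
        simpa only [dist_eq_norm, hsplit] using norm_add_le (y - y') (z - z')
      linarith [(hf y y').2, (hg z z').2]
    have hx : dist x x' - infConv f g x' ≤ infConv f g x :=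
      le_infConv fun y z hyz => by linarith [hx' y z hyz]
    linarith

theorem convexOn_infConv [NormedSpace ℝ E] (hf₀ : 0 ≤ f) (hg₀ : 0 ≤ g)
    (hf : ConvexOn ℝ univ f) (hg : ConvexOn ℝ univ g) : ConvexOn ℝ univ (infConv f g) := by
  refine ⟨convex_univ, fun x _ x' _ a b ha hb hab => le_of_forall_pos_le_add fun ε hε => ?_⟩
  obtain ⟨y, z, hyz, hlt⟩ := exists_add_lt_infConv_add (f := f) (g := g) (x := x) hε
  obtain ⟨y', z', hyz', hlt'⟩ := exists_add_lt_infConv_add (f := f) (g := g) (x := x') hε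
  have hsum : (a • y + b • y') + (a • z + b • z') = a • x + b • x' := by
    rw [← hyz, ← hyz']; module
  have hfy := hf.2 (mem_univ y) (mem_univ y') ha hb hab
  have hgz := hg.2 (mem_univ z) (mem_univ z') ha hb hab
  simp only [smul_eq_mul] at hfy hgz ⊢
  calc infConv f g (a • x + b • x')
      ≤ f (a • y + b • y') + g (a • z + b • z') := infConv_le hf₀ hg₀ hsum
    _ ≤ a * (f y + g z) + b * (f y' + g z') := by linarith
    _ ≤ a * (infConv f g x + ε) + b * (infConv f g x' + ε) := by gcongr
    _ = a * infConv f g x + b * infConv f g x' + ε := by linear_combination ε * hab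

end InfConv

section Perspective

variable {E : Type*} [NormedAddCommGroup E] [NormedSpace ℝ E] {lam : ℝ} {f : E → ℝ}

/-- The paper's `lam ⋆ f`. -/
noncomputable def perspective (lam : ℝ) (f : E → ℝ) (x : E) : ℝ := lam * f (lam⁻¹ • x)

theorem isKatetov_perspective (hlam : 0 < lam) (hf : IsKatetov f) :
    IsKatetov (perspective lam f) := by
  have hdist (x y : E) : dist x y = lam * dist (lam⁻¹ • x) (lam⁻¹ • y) := by
    rw [dist_smul₀, Real.norm_eq_abs, abs_inv, abs_of_pos hlam, mul_inv_cancel_left₀ hlam.ne']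
  intro x y
  refine ⟨?_, ?_⟩
  · rw [perspective, perspective, ← mul_sub, abs_mul, abs_of_pos hlam, hdist]
    exact mul_le_mul_of_nonneg_left (hf _ _).1 hlam.le
  · rw [perspective, perspective, ← mul_add, hdist]
    exact mul_le_mul_of_nonneg_left (hf _ _).2 hlam.le

theorem convexOn_perspective (hlam : 0 ≤ lam) (hf : ConvexOn ℝ univ f) :
    ConvexOn ℝ univ (perspective lam f) := by
  have hcomp := hf.comp_linearMap (lam⁻¹ • LinearMap.id)
  rw [preimage_univ] at hcomp
  exact hcomp.smul hlam

theorem abs_perspective_sub_perspective_le (hlam : 0 < lam) {f' : E → ℝ} {C : ℝ}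
    (hC : ∀ u, |f u - f' u| ≤ C) (x : E) :
    |perspective lam f x - perspective lam f' x| ≤ lam * C := by
  rw [perspective, perspective, ← mul_sub, abs_mul, abs_of_pos hlam]
  exact mul_le_mul_of_nonneg_left (hC _) hlam.le

theorem isKatetov_infConv_perspective (hlam : 0 < lam) (hf : IsKatetov f) {g : E → ℝ}
    (hg : IsKatetov g) : IsKatetov (infConv (perspective lam f) g) :=
  isKatetov_infConv (isKatetov_perspective hlam hf) hg

theorem convexOn_infConv_perspective (hlam : 0 < lam) (hf : IsKatetov f) {g : E → ℝ}
    (hg : IsKatetov g) (hfc : ConvexOn ℝ univ f) (hgc : ConvexOn ℝ univ g) :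
    ConvexOn ℝ univ (infConv (perspective lam f) g) :=
  convexOn_infConv (isKatetov_perspective hlam hf).nonneg hg.nonneg
    (convexOn_perspective hlam.le hfc) hgc

theorem abs_infConv_perspective_sub_le (hlam : 0 < lam) {f' g : E → ℝ} (hf : IsKatetov f)
    (hf' : IsKatetov f') (hg : IsKatetov g) {C : ℝ} (hC : ∀ u, |f u - f' u| ≤ C) (x : E) :
    |infConv (perspective lam f) g x - infConv (perspective lam f') g x| ≤ lam * C :=
  abs_infConv_sub_infConv_le (isKatetov_perspective hlam hf).nonneg
    (isKatetov_perspective hlam hf').nonneg hg.nonneg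
    (abs_perspective_sub_perspective_le hlam hC)

end Perspective

open BoundedContinuousFunction

section FixedPoint

variable {E : Type*} [NormedAddCommGroup E] {f g : E → ℝ}

def IsKatetov.boundedSub (hf : IsKatetov f) (hg : IsKatetov g) : E →ᵇ ℝ :=
  .ofNormedAddCommGroup (f - g) (hf.continuous.sub hg.continuous) (f 0 + g 0)
    (hf.abs_sub_le_add hg 0)

theorem IsKatetov.add_boundedSub (hf : IsKatetov f) (hg : IsKatetov g) :
    g + ⇑(hf.boundedSub hg) = f :=
  add_sub_cancel g f

variable [NormedSpace ℝ E] {lam : ℝ}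

def convexKatetovOffset (g : E → ℝ) : Set (E →ᵇ ℝ) :=
  {h | IsKatetov (g + ⇑h) ∧ ConvexOn ℝ univ (g + ⇑h)}

theorem isClosed_convexKatetovOffset (g : E → ℝ) : IsClosed (convexKatetovOffset g) := by
  have hcont : Continuous fun h : E →ᵇ ℝ => g + ⇑h := continuous_const.add continuous_coe
  exact (isClosed_setOf_isKatetov.preimage hcont).inter
    (isClosed_setOfPred_convexOn.preimage hcont)

instance (g : E → ℝ) : CompleteSpace (convexKatetovOffset g) :=
  have := isClosed_convexKatetovOffset g
  IsClosed.completeSpace_coe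

theorem IsKatetov.boundedSub_mem_convexKatetovOffset (hf : IsKatetov f) (hg : IsKatetov g)
    (hfc : ConvexOn ℝ univ f) : hf.boundedSub hg ∈ convexKatetovOffset g := by
  rw [convexKatetovOffset, mem_ofPred_eq, hf.add_boundedSub hg]
  exact ⟨hf, hfc⟩

noncomputable def convexKatetovStep (hlam : 0 < lam) (hg : IsKatetov g)
    (hgc : ConvexOn ℝ univ g) (h : convexKatetovOffset g) : convexKatetovOffset g :=
  ⟨(isKatetov_infConv_perspective hlam h.2.1 hg).boundedSub hg,
    (isKatetov_infConv_perspective hlam h.2.1 hg).boundedSub_mem_convexKatetovOffset hg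
      (convexOn_infConv_perspective hlam h.2.1 hg h.2.2 hgc)⟩

theorem convexKatetovStep_apply (hlam : 0 < lam) (hg : IsKatetov g) (hgc : ConvexOn ℝ univ g)
    (h : convexKatetovOffset g) :
    g + ⇑(convexKatetovStep hlam hg hgc h).1 = infConv (perspective lam (g + ⇑h.1)) g :=
  (isKatetov_infConv_perspective hlam h.2.1 hg).add_boundedSub hg

theorem contractingWith_convexKatetovStep (hlam : lam ∈ Ioo 0 1) (hg : IsKatetov g)
    (hgc : ConvexOn ℝ univ g) :
    ContractingWith lam.toNNReal (convexKatetovStep hlam.1 hg hgc) := by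
  refine ⟨Real.toNNReal_lt_one.mpr hlam.2, LipschitzWith.of_dist_le' fun h h' => ?_⟩
  rw [Subtype.dist_eq, Subtype.dist_eq]
  refine (dist_le (mul_nonneg hlam.1.le dist_nonneg)).mpr fun x => ?_
  have hdiff (u : E) : |(g + ⇑h.1) u - (g + ⇑h'.1) u| ≤ dist h.1 h'.1 := by
    simpa [Real.dist_eq] using dist_coe_le_dist (f := h.1) (g := h'.1) u
  simpa [Real.dist_eq, convexKatetovStep, IsKatetov.boundedSub] using
    abs_infConv_perspective_sub_le hlam.1 h.2.1 h'.2.1 hg hdiff x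

theorem isFixedPt_convexKatetovStep_iff (hlam : 0 < lam) (hg : IsKatetov g)
    (hgc : ConvexOn ℝ univ g) {h : convexKatetovOffset g} :
    IsFixedPt (convexKatetovStep hlam hg hgc) h ↔
      infConv (perspective lam (g + ⇑h.1)) g = g + ⇑h.1 := by
  rw [IsFixedPt, ← convexKatetovStep_apply hlam hg hgc, Subtype.ext_iff, add_right_inj,
    DFunLike.coe_fn_eq]

end FixedPoint

theorem katetov_convex_fixed_point_general {X : Type*}
    [NormedAddCommGroup X] [NormedSpace ℝ X]
    (lam : ℝ) (hlam : lam ∈ Set.Ioo (0 : ℝ) 1)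
    (g : X → ℝ) (hgK : IsKatetov g) (hgC : ConvexOn ℝ Set.univ g) :
    ∃! f₀ : X → ℝ, (IsKatetov f₀ ∧ ConvexOn ℝ Set.univ f₀) ∧
      ∀ x : X, sInf {r : ℝ | ∃ y z : X, y + z = x ∧ r = lam * f₀ (lam⁻¹ • y) + g z}
        = f₀ x := by
  have hΦ := contractingWith_convexKatetovStep hlam hgK hgC
  have : Nonempty (convexKatetovOffset g) :=
    ⟨⟨hgK.boundedSub hgK, hgK.boundedSub_mem_convexKatetovOffset hgK hgC⟩⟩
  have hfix := (isFixedPt_convexKatetovStep_iff hlam.1 hgK hgC).mp hΦ.fixedPoint_isFixedPt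
  refine ⟨g + ⇑hΦ.fixedPoint.1, ⟨hΦ.fixedPoint.2, congrFun hfix⟩, ?_⟩
  rintro f ⟨⟨hfK, hfC⟩, hf⟩
  have hfixf : IsFixedPt (convexKatetovStep hlam.1 hgK hgC)
      ⟨hfK.boundedSub hgK, hfK.boundedSub_mem_convexKatetovOffset hgK hfC⟩ := by
    rw [isFixedPt_convexKatetovStep_iff, hfK.add_boundedSub hgK]
    exact funext hf
  rw [← hΦ.fixedPoint_unique hfixf, hfK.add_boundedSub hgK]

/-- for a Banach space `X`, `λ ∈ (0,1)` and a convex Katetov map `g`,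
there is a unique convex Katetov map `f₀` with `(λ ⋆ f₀) ⊕ g = f₀`, where
`(λ ⋆ f)(x) = λ f(x/λ)` and `⊕` is the inf-convolution with respect to addition. -/
theorem katetov_convex_fixed_point {X : Type*}
    [NormedAddCommGroup X] [NormedSpace ℝ X] [CompleteSpace X]
    (lam : ℝ) (hlam : lam ∈ Set.Ioo (0 : ℝ) 1)
    (g : X → ℝ) (hgK : IsKatetov g) (hgC : ConvexOn ℝ Set.univ g) :
    ∃! f₀ : X → ℝ, (IsKatetov f₀ ∧ ConvexOn ℝ Set.univ f₀) ∧
      ∀ x : X, sInf {r : ℝ | ∃ y z : X, y + z = x ∧ r = lam * f₀ (lam⁻¹ • y) + g z}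
        = f₀ x :=
  katetov_convex_fixed_point_general lam hlam g hgK hgC
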